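/- arXiv:2605.26011 — 6 statements merged into one kernel-verified Lean document; each statement's English description precedes it below -/
import Mathlib

section
/- Degree lowering for the well-poised rational monomials: let q, s ∈ ℂ with s² = q and 0 < |q| < 1, let a, c ∈ ℂ with a ≠ 0, let n ≥ 1, and let z ∈ ℂ with z ∉ {0, 1, −1}. Assume all displayed q-shifted-factorial denominators are nonzero, namely (csz; q)_n, (c/(sz); q)_n, (cz/s; q)_n, (cs/z; q)_n, (cs³z; q)_{n−1}, (cs³/z; q)_{n−1} are all ≠ 0. Then (D_{c,q} Φ_n(·; a, c))(z) = −(2a(1 − c/a)(1 − a c q^{n−1})(1 − q^n)/(1 − q)) · Φ_{n−1}(z; a s, c s³). -/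
open Complex Finset Filter Topology

/-- The finite q-shifted factorial `(a; q)_n = ∏_{j=0}^{n-1} (1 - a q^j)`. -/
noncomputable def qPoch (a q : ℂ) (n : ℕ) : ℂ := ∏ j ∈ Finset.range n, (1 - a * q ^ j)

/-- The infinite q-shifted factorial `(a; q)_∞ = ∏_{j=0}^{∞} (1 - a q^j)`. -/
noncomputable def qPochInf (a q : ℂ) : ℂ := ∏' j : ℕ, (1 - a * q ^ j)

/-- The well-poised rational monomial `Φ_k(z; a, c) = (az, a/z; q)_k / (cz, c/z; q)_k`. -/
noncomputable def wpPhi (q a c z : ℂ) (k : ℕ) : ℂ :=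
  (qPoch (a * z) q k * qPoch (a / z) q k) / (qPoch (c * z) q k * qPoch (c / z) q k)

/-- The Askey–Wilson divided-difference operator, with `s` a fixed square root of `q`:
`(D_q f)(z) = (f(sz) - f(z/s)) / ((s - s⁻¹)(z - z⁻¹)/2)`. -/
noncomputable def awD (s : ℂ) (f : ℂ → ℂ) (z : ℂ) : ℂ :=
  (f (s * z) - f (z / s)) / ((s - s⁻¹) * (z - z⁻¹) / 2)

/-- The well-poised divided-difference operator
`(D_{c,q} f)(z) = (1 - czs⁻¹)(1 - czs)(1 - cs⁻¹/z)(1 - cs/z) (D_q f)(z)`. -/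
noncomputable def wpD (s c : ℂ) (f : ℂ → ℂ) (z : ℂ) : ℂ :=
  (1 - c * z / s) * (1 - c * z * s) * (1 - c / (s * z)) * (1 - c * s / z) * awD s f z

/-- The iterated well-poised operators: `D^{(0)} = id`,
`D^{(k)} = D_{c s^{3(k-1)}, q} ∘ D^{(k-1)}`. -/
noncomputable def wpDIter (s c : ℂ) : ℕ → (ℂ → ℂ) → ℂ → ℂ
  | 0 => fun f => f
  | k + 1 => fun f => wpD s (c * s ^ (3 * k)) (wpDIter s c k f)

/-- The well-poised Taylor coefficient `t_k^{(a,c)}(f)`. -/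
noncomputable def wpT (q s a c : ℂ) (k : ℕ) (f : ℂ → ℂ) : ℂ :=
  (-1) ^ k * (s ^ (k * (k - 1) / 2))⁻¹ * (1 - q) ^ k /
    ((2 * a) ^ k *
      (qPoch q q k * qPoch (c / a) q k * qPoch (a * c * q ^ (k - 1)) q k)) *
    wpDIter s c k f (a * s ^ k)

lemma qPoch_succ_right (x q : ℂ) (m : ℕ) :
    qPoch x q (m + 1) = qPoch x q m * (1 - x * q ^ m) := Finset.prod_range_succ _ _

lemma qPoch_succ_left (x q : ℂ) (m : ℕ) :
    qPoch x q (m + 1) = (1 - x) * qPoch (x * q) q m := by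
  unfold qPoch
  rw [Finset.prod_range_succ']
  simp only [pow_zero, mul_one]
  rw [mul_comm]
  congr 1
  exact Finset.prod_congr rfl fun j _ => by ring

lemma qPoch_factor_ne_zero {x q : ℂ} {n j : ℕ} (h : qPoch x q n ≠ 0) (hj : j < n) :
    1 - x * q ^ j ≠ 0 := fun h0 =>
  h (Finset.prod_eq_zero (Finset.mem_range.mpr hj) h0)


set_option maxHeartbeats 40000000 in
/-- Degree lowering for the well-poised rational monomials. -/
theorem degree_lowering (q s a c z : ℂ) (hs : s ^ 2 = q)
    (hq0 : 0 < ‖q‖) (hq1 : ‖q‖ < 1) (ha : a ≠ 0) (n : ℕ) (hn : 1 ≤ n)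
    (hz0 : z ≠ 0) (hz1 : z ≠ 1) (hz2 : z ≠ -1)
    (h1 : qPoch (c * s * z) q n ≠ 0) (h2 : qPoch (c / (s * z)) q n ≠ 0)
    (h3 : qPoch (c * z / s) q n ≠ 0) (h4 : qPoch (c * s / z) q n ≠ 0)
    (h5 : qPoch (c * s ^ 3 * z) q (n - 1) ≠ 0)
    (h6 : qPoch (c * s ^ 3 / z) q (n - 1) ≠ 0) :
    wpD s c (fun w => wpPhi q a c w n) z =
      -(2 * a * (1 - c / a) * (1 - a * c * q ^ (n - 1)) * (1 - q ^ n) / (1 - q)) *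
        wpPhi q (a * s) (c * s ^ 3) z (n - 1) := by
  subst hs
  obtain ⟨m, rfl⟩ : ∃ m, n = m + 1 := ⟨n - 1, (Nat.succ_pred_eq_of_pos hn).symm⟩
  simp only [Nat.add_sub_cancel] at h5 h6 ⊢
  -- basic nonvanishing
  have hq : s ^ 2 ≠ 0 := fun h => by simp [h] at hq0
  have hs0 : s ≠ 0 := fun h => hq (by simp [h])
  have hq1' : (1 : ℂ) - s ^ 2 ≠ 0 := by
    intro h
    have : s ^ 2 = 1 := by linear_combination -h
    rw [this] at hq1; simp at hq1
  have hzz : z * z ≠ 1 := by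
    intro h
    have h' : (z - 1) * (z + 1) = 0 := by ring_nf; linear_combination h
    rcases mul_eq_zero.mp h' with h'' | h''
    · exact hz1 (by linear_combination h'')
    · exact hz2 (by linear_combination h'')
  have hzi : z - z⁻¹ ≠ 0 := by
    intro h
    apply hzz
    field_simp at h
    linear_combination h
  have hsi : s - s⁻¹ ≠ 0 := by
    intro h
    apply hq1'
    field_simp at h
    linear_combination -h
  -- factor nonvanishing from the qPoch hypotheses
  have hf1 : (1 : ℂ) - c * s * z ≠ 0 := by
    simpa using qPoch_factor_ne_zero h1 (Nat.succ_pos m)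
  have hf1' : (1 : ℂ) - c * s * z * (s ^ 2) ^ m ≠ 0 :=
    qPoch_factor_ne_zero h1 (Nat.lt_succ_self m)
  have hf2 : (1 : ℂ) - c / (s * z) ≠ 0 := by
    simpa using qPoch_factor_ne_zero h2 (Nat.succ_pos m)
  have hf3 : (1 : ℂ) - c * z / s ≠ 0 := by
    simpa using qPoch_factor_ne_zero h3 (Nat.succ_pos m)
  have hf4 : (1 : ℂ) - c * s / z ≠ 0 := by
    simpa using qPoch_factor_ne_zero h4 (Nat.succ_pos m)
  have hf4' : (1 : ℂ) - c * s / z * (s ^ 2) ^ m ≠ 0 :=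
    qPoch_factor_ne_zero h4 (Nat.lt_succ_self m)
  -- peel relations
  have ea1 : qPoch (a * (s * z)) (s ^ 2) (m + 1)
      = qPoch (a * s * z) (s ^ 2) m * (1 - a * s * z * (s ^ 2) ^ m) := by
    rw [show a * (s * z) = a * s * z by ring, qPoch_succ_right]
  have ea2 : qPoch (a / (s * z)) (s ^ 2) (m + 1)
      = (1 - a / (s * z)) * qPoch (a * s / z) (s ^ 2) m := by
    rw [qPoch_succ_left, show a / (s * z) * s ^ 2 = a * s / z by field_simp]
  have ec1 : qPoch (c * (s * z)) (s ^ 2) (m + 1)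
      = (1 - c * s * z) * qPoch (c * s ^ 3 * z) (s ^ 2) m := by
    rw [show c * (s * z) = c * s * z by ring, qPoch_succ_left,
      show c * s * z * s ^ 2 = c * s ^ 3 * z by ring]
  have ec2 : qPoch (c / (s * z)) (s ^ 2) (m + 1)
      = (1 - c / (s * z)) *
        ((1 - c * s / z) * qPoch (c * s ^ 3 / z) (s ^ 2) m / (1 - c * s / z * (s ^ 2) ^ m)) := by
    rw [qPoch_succ_left, show c / (s * z) * s ^ 2 = c * s / z by field_simp]
    congr 1
    rw [eq_div_iff hf4', ← qPoch_succ_right, qPoch_succ_left,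
      show c * s / z * s ^ 2 = c * s ^ 3 / z by field_simp]
  have ea3 : qPoch (a * (z / s)) (s ^ 2) (m + 1)
      = (1 - a * z / s) * qPoch (a * s * z) (s ^ 2) m := by
    rw [show a * (z / s) = a * z / s by ring, qPoch_succ_left,
      show a * z / s * s ^ 2 = a * s * z by field_simp]
  have ea4 : qPoch (a / (z / s)) (s ^ 2) (m + 1)
      = qPoch (a * s / z) (s ^ 2) m * (1 - a * s / z * (s ^ 2) ^ m) := by
    rw [show a / (z / s) = a * s / z by field_simp, qPoch_succ_right]
  have ec3 : qPoch (c * (z / s)) (s ^ 2) (m + 1)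
      = (1 - c * z / s) *
        ((1 - c * s * z) * qPoch (c * s ^ 3 * z) (s ^ 2) m / (1 - c * s * z * (s ^ 2) ^ m)) := by
    rw [show c * (z / s) = c * z / s by ring, qPoch_succ_left,
      show c * z / s * s ^ 2 = c * s * z by field_simp]
    congr 1
    rw [eq_div_iff hf1', ← qPoch_succ_right, qPoch_succ_left,
      show c * s * z * s ^ 2 = c * s ^ 3 * z by ring]
  have ec4 : qPoch (c / (z / s)) (s ^ 2) (m + 1)
      = (1 - c * s / z) * qPoch (c * s ^ 3 / z) (s ^ 2) m := by
    rw [show c / (z / s) = c * s / z by field_simp, qPoch_succ_left,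
      show c * s / z * s ^ 2 = c * s ^ 3 / z by field_simp]
  have hg2 : s * z - c ≠ 0 := by
    intro h; apply hf2
    rw [show 1 - c / (s * z) = (s * z - c) / (s * z) by field_simp, h, zero_div]
  have hg3 : s - c * z ≠ 0 := by
    intro h; apply hf3
    rw [show 1 - c * z / s = (s - c * z) / s by field_simp, h, zero_div]
  have hg4 : z - c * s ≠ 0 := by
    intro h; apply hf4
    rw [show 1 - c * s / z = (z - c * s) / z by field_simp, h, zero_div]
  have hg4' : z - c * s * (s ^ 2) ^ m ≠ 0 := by
    intro h; apply hf4'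
    rw [show 1 - c * s / z * (s ^ 2) ^ m = (z - c * s * (s ^ 2) ^ m) / z by field_simp, h,
      zero_div]
  have hgs : s ^ 2 - 1 ≠ 0 := fun h => hq1' (by linear_combination -h)
  have hgz : z ^ 2 - 1 ≠ 0 := fun h => hzz (by linear_combination h)
  simp only [wpD, awD, wpPhi]
  rw [ea1, ea2, ec1, ec2, ea3, ea4, ec3, ec4, pow_succ ((s : ℂ) ^ 2) m]
  generalize hQ : ((s : ℂ) ^ 2) ^ m = Q at hf1' hf4' hg4' ⊢
  generalize hA1 : qPoch (a * s * z) (s ^ 2) m = A1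
  generalize hA2 : qPoch (a * s / z) (s ^ 2) m = A2
  generalize hB1 : qPoch (c * s ^ 3 * z) (s ^ 2) m = B1 at h5 ⊢
  generalize hB2 : qPoch (c * s ^ 3 / z) (s ^ 2) m = B2 at h6 ⊢
  set d1 : ℂ := 1 - c * s * z with hd1
  set d2 : ℂ := 1 - c / (s * z) with hd2
  set d3 : ℂ := 1 - c * z / s with hd3
  set d4 : ℂ := 1 - c * s / z with hd4
  set e1 : ℂ := 1 - c * s * z * Q with he1
  set e4 : ℂ := 1 - c * s / z * Q with he4
  have rDA : d1 * B1 * (d2 * (d4 * B2 / e4)) = d1 * B1 * d2 * d4 * B2 / e4 := by ring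
  have rDB : d3 * (d1 * B1 / e1) * (d4 * B2) = d1 * B1 * d3 * d4 * B2 / e1 := by ring
  rw [rDA, rDB, div_div_eq_mul_div, div_div_eq_mul_div, div_div_eq_mul_div]
  field_simp [sub_ne_zero.mp hgs, sub_ne_zero.mp hgz]
  have hgs' : s * s - 1 ≠ 0 := fun h => hgs (by linear_combination h)
  have hgz' : z * z - 1 ≠ 0 := fun h => hgz (by linear_combination h)
  have hF1 : s * z * (d1 * B1 * d2 * d4 * B2) ≠ 0 :=
    mul_ne_zero (mul_ne_zero hs0 hz0)
      (mul_ne_zero (mul_ne_zero (mul_ne_zero (mul_ne_zero hf1 h5) hf2) hf4) h6)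
  have hF2 : s * z * (d1 * B1 * d3 * d4 * B2) ≠ 0 :=
    mul_ne_zero (mul_ne_zero hs0 hz0)
      (mul_ne_zero (mul_ne_zero (mul_ne_zero (mul_ne_zero hf1 h5) hf3) hf4) h6)
  simp only [hd1, hd2, hd3, hd4, he1, he4]
  field_simp
  ring
end

section
/- Iterated degree lowering and the delta property: let q, s ∈ ℂ with s² = q and 0 < |q| < 1, let a, c ∈ ℂ with a ≠ 0, and let 0 ≤ k ≤ n be integers. For z ∈ ℂ∖{0} such that every intermediate evaluation is defined (i.e. (s^j z)² ≠ 1 for all integers |j| ≤ k and all q-shifted-factorial denominators occurring in the intermediate expressions are nonzero), D^{(k)}_{c,q} Φ_n(·; a, c)(z) = (−1)^k (2a)^k s^{k(k−1)/2} (q;q)_n (c/a;q)_k (a c q^{n−1};q)_k / ((q;q)_{n−k} (1 − q)^k) · Φ_{n−k}(z; a s^k, c s^{3k}). Consequently, evaluating at z = a s^k (assuming this point satisfies the same nondegeneracy conditions), (D^{(k)}_{c,q} Φ_n(·; a, c))(a s^k) = (−1)^k (2a)^k s^{k(k−1)/2} (q, c/a, a c q^{k−1}; q)_k / (1 − q)^k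 if n = k, and = 0 if n > k. -/
open Complex Finset Filter Topology

lemma qPoch_succ (x q : ℂ) (n : ℕ) : qPoch x q (n+1) = qPoch x q n * (1 - x * q ^ n) :=
  Finset.prod_range_succ _ n

lemma qPoch_succ' (x q : ℂ) (n : ℕ) : qPoch x q (n+1) = (1 - x) * qPoch (x*q) q n := by
  rw [qPoch, Finset.prod_range_succ']
  simp only [pow_zero, mul_one]
  rw [mul_comm, qPoch]
  congr 1
  refine Finset.prod_congr rfl fun j _ => ?_
  rw [pow_succ']
  ring

lemma qPoch_factor_ne {x q : ℂ} {n : ℕ} (h : qPoch x q n ≠ 0) {j : ℕ} (hj : j < n) :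
    1 - x * q ^ j ≠ 0 := by
  rw [qPoch, Finset.prod_ne_zero_iff] at h
  exact h j (Finset.mem_range.2 hj)

lemma qPoch_front_ne {x q : ℂ} {n : ℕ} (h : qPoch x q (n+1) ≠ 0) : 1 - x ≠ 0 := by
  have := qPoch_factor_ne h (Nat.succ_pos n)
  simpa using this

lemma sub_inv_ne {z : ℂ} (hz : z ≠ 0) (hz1 : z^2 ≠ 1) : z - z⁻¹ ≠ 0 := by
  have h : z - z⁻¹ = (z^2 - 1)/z := by field_simp
  rw [h]
  exact div_ne_zero (sub_ne_zero.2 hz1) hz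

lemma fracCore (d1 d2 d3 d4 d5 NF NG u v : ℂ) (h1 : d1 ≠ 0) (h2 : d2 ≠ 0) (h3 : d3 ≠ 0)
    (h4 : d4 ≠ 0) (hu : u ≠ 0) :
    d4*d5*d2*d3 * ((NF/(d1*d2*d3) - NG/(d4*d1*d3)) / (u/v))
      = d5*(d4*NF - d2*NG)*v/(d1*u) := by
  have hD1 : d1*d2*d3 ≠ 0 := mul_ne_zero (mul_ne_zero h1 h2) h3
  have hD2 : d4*d1*d3 ≠ 0 := mul_ne_zero (mul_ne_zero h4 h1) h3
  rw [div_sub_div _ _ hD1 hD2, div_div_eq_mul_div, div_mul_eq_mul_div, div_div,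
      ← mul_div_assoc, div_eq_div_iff (mul_ne_zero (mul_ne_zero hD1 hD2) hu)
        (mul_ne_zero h1 hu)]
  ring

set_option maxHeartbeats 2000000 in
lemma onestep (s a c z : ℂ) (m : ℕ) (hs : s ≠ 0) (hq1 : s^2 ≠ 1) (hz : z ≠ 0) (hz1 : z^2 ≠ 1)
    (hA : qPoch (c*s*z) (s^2) (m+1) ≠ 0)
    (hB : qPoch (c*s/z) (s^2) (m+1) ≠ 0)
    (hC : qPoch (c*z/s) (s^2) (m+1) ≠ 0)
    (hD : qPoch (c/(s*z)) (s^2) (m+1) ≠ 0)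
    (hG : qPoch (c*s^3*z) (s^2) m ≠ 0)
    (hH : qPoch (c*s^3/z) (s^2) m ≠ 0) :
    wpD s c (fun w => wpPhi (s^2) a c w (m+1)) z
      = 2*(c-a)*(1 - (s^2)^(m+1))*(1 - a*c*(s^2)^m)/(1 - s^2)
        * wpPhi (s^2) (a*s) (c*s^3) z m := by
  have n1 : (1 - c*s*z) ≠ 0 := qPoch_front_ne hA
  have n2 : (1 - c*s/z) ≠ 0 := qPoch_front_ne hB
  have n3 : (1 - c*z/s) ≠ 0 := qPoch_front_ne hC
  have n4 : (1 - c/(s*z)) ≠ 0 := qPoch_front_ne hD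
  have n5 : (1 - c*s*z*(s^2)^m) ≠ 0 := qPoch_factor_ne hA (Nat.lt_succ_self m)
  have n6 : (1 - c*s/z*(s^2)^m) ≠ 0 := qPoch_factor_ne hB (Nat.lt_succ_self m)
  have n9 : s^2 - 1 ≠ 0 := sub_ne_zero.2 hq1
  have n10 : z^2 - 1 ≠ 0 := sub_ne_zero.2 hz1
  have n11 : (1 : ℂ) - s^2 ≠ 0 := sub_ne_zero.2 (Ne.symm hq1)
  set t := (s^2)^m with ht
  set α := qPoch (a*s*z) (s^2) m with hα
  set β := qPoch (a*s/z) (s^2) m with hβ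
  set γ := qPoch (c*s^3*z) (s^2) m with hγ
  set δ := qPoch (c*s^3/z) (s^2) m with hδ
  have key1 : qPoch (c*s*z) (s^2) m = (1 - c*s*z) * γ / (1 - c*s*z*t) := by
    rw [eq_div_iff n5, hγ, ht, ← qPoch_succ, qPoch_succ', show c*s*z*s^2 = c*s^3*z by ring]
  have key2 : qPoch (c*s/z) (s^2) m = (1 - c*s/z) * δ / (1 - c*s/z*t) := by
    rw [eq_div_iff n6, hδ, ht, ← qPoch_succ, qPoch_succ',
        show c*s/z*s^2 = c*s^3/z by field_simp]
  have E1 : wpPhi (s^2) a c (s*z) (m+1)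
      = α*β*((1 - a*s*z*t)*(1 - a/(s*z))*(1 - c*s/z*t))
          /(γ*δ*((1 - c*s*z)*(1 - c/(s*z))*(1 - c*s/z))) := by
    rw [wpPhi, show a*(s*z) = a*s*z by ring, show c*(s*z) = c*s*z by ring,
        qPoch_succ (a*s*z), qPoch_succ' (a/(s*z)), show a/(s*z)*s^2 = a*s/z by field_simp,
        qPoch_succ' (c*s*z), show c*s*z*s^2 = c*s^3*z by ring,
        qPoch_succ' (c/(s*z)), show c/(s*z)*s^2 = c*s/z by field_simp,
        key2]
    simp only [← hα, ← hβ, ← hγ, ← hδ, ← ht]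
    rw [show (1 - c*s*z)*γ*((1 - c/(s*z))*((1 - c*s/z)*δ/(1 - c*s/z*t)))
          = γ*δ*((1 - c*s*z)*(1 - c/(s*z))*(1 - c*s/z))/(1 - c*s/z*t) from by
        rw [div_eq_mul_inv, div_eq_mul_inv]; ring]
    rw [div_div_eq_mul_div]
    rw [show α*(1 - a*s*z*t)*((1 - a/(s*z))*β)*(1 - c*s/z*t)
          = α*β*((1 - a*s*z*t)*(1 - a/(s*z))*(1 - c*s/z*t)) from by ring]
  have E2 : wpPhi (s^2) a c (z/s) (m+1)
      = α*β*((1 - a*z/s)*(1 - a*s/z*t)*(1 - c*s*z*t))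
          /(γ*δ*((1 - c*z/s)*(1 - c*s*z)*(1 - c*s/z))) := by
    rw [wpPhi, show a/(z/s) = a*s/z from div_div_eq_mul_div a z s,
        show c/(z/s) = c*s/z from div_div_eq_mul_div c z s,
        qPoch_succ' (a*(z/s)), show a*(z/s)*s^2 = a*s*z by field_simp,
        qPoch_succ (a*s/z),
        qPoch_succ' (c*(z/s)), show c*(z/s)*s^2 = c*s*z by field_simp,
        qPoch_succ' (c*s/z), show c*s/z*s^2 = c*s^3/z by field_simp,
        key1]
    simp only [← hα, ← hβ, ← hγ, ← hδ, ← ht]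
    rw [show (1 - c*(z/s))*((1 - c*s*z)*γ/(1 - c*s*z*t))*((1 - c*s/z)*δ)
          = γ*δ*((1 - c*z/s)*(1 - c*s*z)*(1 - c*s/z))/(1 - c*s*z*t) from by
        rw [div_eq_mul_inv, div_eq_mul_inv]; ring]
    rw [div_div_eq_mul_div]
    rw [show (1 - a*(z/s))*α*(β*(1 - a*s/z*t))*(1 - c*s*z*t)
          = α*β*((1 - a*z/s)*(1 - a*s/z*t)*(1 - c*s*z*t)) from by ring]
  have hden : (s - s⁻¹)*(z - z⁻¹)/2 = (s^2-1)*(z^2-1)/(2*s*z) := by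
    field_simp
  have frac := fracCore (1 - c*s*z) (1 - c/(s*z)) (1 - c*s/z) (1 - c*z/s) (1 - c*z*s)
      ((1 - a*s*z*t)*(1 - a/(s*z))*(1 - c*s/z*t))
      ((1 - a*z/s)*(1 - a*s/z*t)*(1 - c*s*z*t))
      ((s^2-1)*(z^2-1)) (2*s*z) n1 n4 n2 n3 (mul_ne_zero n9 n10)
  have lift1 : (1 - c*z/s)*((1 - a*s*z*t)*(1 - a/(s*z))*(1 - c*s/z*t))
      = (s - c*z)*((1 - a*s*z*t)*(s*z - a)*(z - c*s*t))/(s*(s*z)*z) := by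
    rw [div_mul_eq_mul_div, one_sub_div hz, one_sub_div hs, one_sub_div (mul_ne_zero hs hz)]
    ring
  have lift2 : (1 - c/(s*z))*((1 - a*z/s)*(1 - a*s/z*t)*(1 - c*s*z*t))
      = (s*z - c)*((s - a*z)*(z - a*s*t)*(1 - c*s*z*t))/(s*(s*z)*z) := by
    rw [div_mul_eq_mul_div, one_sub_div hz, one_sub_div hs, one_sub_div (mul_ne_zero hs hz)]
    ring
  have core2 : (1 - c*z*s)*((1 - c*z/s)*((1 - a*s*z*t)*(1 - a/(s*z))*(1 - c*s/z*t))
        - (1 - c/(s*z))*((1 - a*z/s)*(1 - a*s/z*t)*(1 - c*s*z*t)))*(2*s*z)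
        /((1 - c*s*z)*((s^2-1)*(z^2-1)))
      = 2*(c-a)*(1 - t*s^2)*(1 - a*c*t)/(1 - s^2) := by
    rw [lift1, lift2, div_sub_div_same]
    rw [show (1 - c*z*s)*(((s - c*z)*((1 - a*s*z*t)*(s*z - a)*(z - c*s*t))
            - (s*z - c)*((s - a*z)*(z - a*s*t)*(1 - c*s*z*t)))/(s*(s*z)*z))*(2*s*z)
          = (1 - c*z*s)*((s - c*z)*((1 - a*s*z*t)*(s*z - a)*(z - c*s*t))
            - (s*z - c)*((s - a*z)*(z - a*s*t)*(1 - c*s*z*t)))*(2*s*z)/(s*(s*z)*z) from by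
        ring]
    rw [div_div, div_eq_div_iff (mul_ne_zero
        (mul_ne_zero (mul_ne_zero hs (mul_ne_zero hs hz)) hz)
        (mul_ne_zero n1 (mul_ne_zero n9 n10))) n11]
    ring
  simp only [wpD, awD]
  rw [E1, E2, hden]
  calc (1 - c*z/s)*(1 - c*z*s)*(1 - c/(s*z))*(1 - c*s/z) *
        ((α*β*((1 - a*s*z*t)*(1 - a/(s*z))*(1 - c*s/z*t))
            /(γ*δ*((1 - c*s*z)*(1 - c/(s*z))*(1 - c*s/z)))
          - α*β*((1 - a*z/s)*(1 - a*s/z*t)*(1 - c*s*z*t))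
            /(γ*δ*((1 - c*z/s)*(1 - c*s*z)*(1 - c*s/z))))
          / ((s^2-1)*(z^2-1)/(2*s*z)))
      = α*β/(γ*δ) * ((1 - c*z/s)*(1 - c*z*s)*(1 - c/(s*z))*(1 - c*s/z)
          * (((1 - a*s*z*t)*(1 - a/(s*z))*(1 - c*s/z*t)
              /((1 - c*s*z)*(1 - c/(s*z))*(1 - c*s/z))
            - (1 - a*z/s)*(1 - a*s/z*t)*(1 - c*s*z*t)
              /((1 - c*z/s)*(1 - c*s*z)*(1 - c*s/z)))
          / ((s^2-1)*(z^2-1)/(2*s*z)))) := by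
        generalize (1 - a*s*z*t)*(1 - a/(s*z))*(1 - c*s/z*t) = NF
        generalize (1 - a*z/s)*(1 - a*s/z*t)*(1 - c*s*z*t) = NG
        generalize (1 - c*s*z) = D1
        generalize (1 - c/(s*z)) = D2
        generalize (1 - c*s/z) = D3
        generalize (1 - c*z/s) = D4
        generalize (1 - c*z*s) = D5
        generalize (s^2-1)*(z^2-1)/(2*s*z) = W
        ring
    _ = α*β/(γ*δ) * ((1 - c*z*s)*((1 - c*z/s)*((1 - a*s*z*t)*(1 - a/(s*z))*(1 - c*s/z*t))
            - (1 - c/(s*z))*((1 - a*z/s)*(1 - a*s/z*t)*(1 - c*s*z*t)))*(2*s*z)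
            /((1 - c*s*z)*((s^2-1)*(z^2-1)))) := by rw [frac]
    _ = α*β/(γ*δ) * (2*(c-a)*(1 - t*s^2)*(1 - a*c*t)/(1 - s^2)) := by rw [core2]
    _ = 2*(c-a)*(1 - (s^2)^(m+1))*(1 - a*c*(s^2)^m)/(1 - s^2)
          * wpPhi (s^2) (a*s) (c*s^3) z m := by
        rw [wpPhi, show (a*s)*z = a*s*z by ring, show (a*s)/z = a*s/z by ring,
            show (c*s^3)*z = c*s^3*z by ring, show (c*s^3)/z = c*s^3/z by ring,
            show ((s:ℂ)^2)^(m+1) = t*s^2 from by rw [pow_succ, ← ht]]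
        simp only [← hα, ← hβ, ← hγ, ← hδ, ← ht]
        ring

lemma qPoch_zero (x q : ℂ) : qPoch x q 0 = 1 := Finset.prod_range_zero _

lemma one_sub_pow_ne {q : ℂ} (hq : ‖q‖ < 1) (j : ℕ) : 1 - q * q ^ j ≠ 0 := by
  intro h
  rw [sub_eq_zero] at h
  have h1 : ‖q * q ^ j‖ < 1 := by
    rw [norm_mul, norm_pow]
    calc ‖q‖ * ‖q‖ ^ j ≤ ‖q‖ * 1 := by
          gcongr
          exact pow_le_one₀ (norm_nonneg q) hq.le
      _ < 1 := by simpa using hq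
  rw [← h] at h1
  simp at h1

lemma qPoch_q_ne_zero {q : ℂ} (hq : ‖q‖ < 1) (r : ℕ) : qPoch q q r ≠ 0 := by
  rw [qPoch, Finset.prod_ne_zero_iff]
  exact fun j _ => one_sub_pow_ne hq j

lemma tri_succ (k : ℕ) : (k+1)*k/2 = k*(k-1)/2 + k := by
  have h1 := Finset.sum_range_id_mul_two (k+1)
  have h2 := Finset.sum_range_id_mul_two k
  rw [Finset.sum_range_succ] at h1
  simp only [Nat.add_sub_cancel] at h1
  rw [← h1, ← h2, Nat.mul_div_cancel _ (by norm_num), Nat.mul_div_cancel _ (by norm_num)]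

set_option maxHeartbeats 2000000 in
lemma main1 (s a c : ℂ) (hq0 : 0 < ‖s^2‖) (hq1 : ‖s^2‖ < 1) (ha : a ≠ 0) (n : ℕ) :
    ∀ k, k ≤ n → ∀ z : ℂ, z ≠ 0 →
      (∀ j : ℤ, |j| ≤ (k : ℤ) → (s ^ j * z) ^ 2 ≠ 1) →
      (∀ i : ℕ, i ≤ k → ∀ j : ℤ, |j| ≤ (k : ℤ) →
        qPoch (c * s ^ (3 * i) * (s ^ j * z)) (s^2) (n - i) ≠ 0 ∧
        qPoch (c * s ^ (3 * i) / (s ^ j * z)) (s^2) (n - i) ≠ 0) →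
      wpDIter s c k (fun w => wpPhi (s^2) a c w n) z =
        (-1) ^ k * (2 * a) ^ k * s ^ (k * (k - 1) / 2) *
          (qPoch (s^2) (s^2) n * qPoch (c / a) (s^2) k *
            qPoch (a * c * (s^2) ^ (n - 1)) (s^2) k) /
          (qPoch (s^2) (s^2) (n - k) * (1 - s^2) ^ k) *
          wpPhi (s^2) (a * s ^ k) (c * s ^ (3 * k)) z (n - k) := by
  have hs0 : s ≠ 0 := fun h => by simp [h] at hq0
  have hq_ne1 : s^2 ≠ 1 := fun h => by simp [h] at hq1
  intro k
  induction k with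
  | zero =>
    intro _ z hz _ _
    simp only [wpDIter, pow_zero, one_mul, mul_one, Nat.zero_mul, Nat.zero_div,
      Nat.sub_zero, qPoch_zero, Nat.mul_zero]
    rw [div_self (qPoch_q_ne_zero hq1 n), one_mul]
  | succ k ih =>
    intro hk1n z hz hz2 hden
    have hkn : k ≤ n := le_trans (Nat.le_succ k) hk1n
    have hm : n - k = (n - (k+1)) + 1 := by omega
    have hsz : s*z ≠ 0 := mul_ne_zero hs0 hz
    have hzs : z/s ≠ 0 := div_ne_zero hz hs0
    have e1 := ih hkn (s*z) hsz
      (by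
        intro j hj
        rw [show s^(j:ℤ)*(s*z) = s^(j+1)*z from by rw [zpow_add₀ hs0, zpow_one]; ring]
        exact hz2 (j+1) (by rw [abs_le] at hj ⊢; push_cast at hj ⊢; omega))
      (by
        intro i hi j hj
        rw [show s^(j:ℤ)*(s*z) = s^(j+1)*z from by rw [zpow_add₀ hs0, zpow_one]; ring]
        exact hden i (le_trans hi (Nat.le_succ k)) (j+1)
          (by rw [abs_le] at hj ⊢; push_cast at hj ⊢; omega))
    have e2 := ih hkn (z/s) hzs
      (by
        intro j hj
        rw [show s^(j:ℤ)*(z/s) = s^(j-1)*z from by rw [zpow_sub_one₀ hs0]; ring]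
        exact hz2 (j-1) (by rw [abs_le] at hj ⊢; push_cast at hj ⊢; omega))
      (by
        intro i hi j hj
        rw [show s^(j:ℤ)*(z/s) = s^(j-1)*z from by rw [zpow_sub_one₀ hs0]; ring]
        exact hden i (le_trans hi (Nat.le_succ k)) (j-1)
          (by rw [abs_le] at hj ⊢; push_cast at hj ⊢; omega))
    have hz21 : z^2 ≠ 1 := by
      have := hz2 0 (by rw [abs_le]; omega)
      simpa using this
    have habs1 : |(1:ℤ)| ≤ ((k+1 : ℕ) : ℤ) := by rw [abs_le]; omega
    have habsm1 : |(-1:ℤ)| ≤ ((k+1 : ℕ) : ℤ) := by rw [abs_le]; omega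
    have habs0 : |(0:ℤ)| ≤ ((k+1 : ℕ) : ℤ) := by rw [abs_le]; omega
    have hA : qPoch (c*s^(3*k)*s*z) (s^2) ((n-(k+1))+1) ≠ 0 := by
      have h := (hden k (Nat.le_succ k) 1 habs1).1
      rw [show s^(1:ℤ)*z = s*z from by rw [zpow_one], hm] at h
      rw [show c*s^(3*k)*s*z = c*s^(3*k)*(s*z) from by ring]
      exact h
    have hB : qPoch (c*s^(3*k)*s/z) (s^2) ((n-(k+1))+1) ≠ 0 := by
      have h := (hden k (Nat.le_succ k) (-1) habsm1).2
      rw [show c*s^(3*k)/(s^(-1:ℤ)*z) = c*s^(3*k)*s/z from by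
        rw [zpow_neg_one, div_eq_mul_inv, mul_inv, inv_inv, ← mul_assoc, ← div_eq_mul_inv],
        hm] at h
      exact h
    have hC : qPoch (c*s^(3*k)*z/s) (s^2) ((n-(k+1))+1) ≠ 0 := by
      have h := (hden k (Nat.le_succ k) (-1) habsm1).1
      rw [show c*s^(3*k)*(s^(-1:ℤ)*z) = c*s^(3*k)*z/s from by rw [zpow_neg_one]; ring,
        hm] at h
      exact h
    have hD : qPoch (c*s^(3*k)/(s*z)) (s^2) ((n-(k+1))+1) ≠ 0 := by
      have h := (hden k (Nat.le_succ k) 1 habs1).2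
      rw [show s^(1:ℤ)*z = s*z from by rw [zpow_one], hm] at h
      exact h
    have hG : qPoch (c*s^(3*k)*s^3*z) (s^2) (n-(k+1)) ≠ 0 := by
      have h := (hden (k+1) le_rfl 0 habs0).1
      rw [show c*s^(3*(k+1))*(s^(0:ℤ)*z) = c*s^(3*k)*s^3*z from by
        rw [zpow_zero, show 3*(k+1) = 3*k+3 from by ring, pow_add]; ring] at h
      exact h
    have hH : qPoch (c*s^(3*k)*s^3/z) (s^2) (n-(k+1)) ≠ 0 := by
      have h := (hden (k+1) le_rfl 0 habs0).2
      rw [show c*s^(3*(k+1))/(s^(0:ℤ)*z) = c*s^(3*k)*s^3/z from by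
        rw [zpow_zero, one_mul, show 3*(k+1) = 3*k+3 from by ring, pow_add]; ring] at h
      exact h
    have os := onestep s (a*s^k) (c*s^(3*k)) z (n-(k+1)) hs0 hq_ne1 hz hz21 hA hB hC hD hG hH
    simp only [wpD, awD] at os
    set CC := (-1) ^ k * (2 * a) ^ k * s ^ (k * (k - 1) / 2) *
          (qPoch (s^2) (s^2) n * qPoch (c / a) (s^2) k *
            qPoch (a * c * (s^2) ^ (n - 1)) (s^2) k) /
          (qPoch (s^2) (s^2) (n - k) * (1 - s^2) ^ k) with hCC
    rw [hm] at e1 e2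
    simp only [wpDIter, wpD, awD]
    rw [e1, e2, ← mul_sub, mul_div_assoc CC, mul_left_comm _ CC, os]
    rw [show a*s^k*s = a*s^(k+1) from by rw [pow_succ]; ring,
        show c*s^(3*k)*s^3 = c*s^(3*(k+1)) from by
          rw [show 3*(k+1) = 3*k+3 from by ring, pow_add]; ring]
    rw [← mul_assoc, hCC, hm]
    congr 1
    -- constant identity
    have hpow : ((s:ℂ)^2)^(n-1) = (s^2)^(n-(k+1))*(s^2)^k := by
      rw [← pow_add]
      congr 1
      omega
    have hQ2 : qPoch (s^2) (s^2) (n-(k+1)) ≠ 0 := qPoch_q_ne_zero hq1 _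
    have hfac : (1 : ℂ) - s^2*(s^2)^(n-(k+1)) ≠ 0 := one_sub_pow_ne hq1 _
    have hq2ne : (1:ℂ) - s^2 ≠ 0 := sub_ne_zero.2 (Ne.symm hq_ne1)
    rw [Nat.add_sub_cancel, tri_succ, hpow,
        qPoch_succ (s^2) (s^2) (n-(k+1)), qPoch_succ (c/a) (s^2) k,
        qPoch_succ (a*c*((s^2)^(n-(k+1))*(s^2)^k)) (s^2) k]
    field_simp
    ring

/-- Iterated degree lowering and the delta property. -/
theorem iterated_lowering_and_delta (q s a c : ℂ) (hs : s ^ 2 = q)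
    (hq0 : 0 < ‖q‖) (hq1 : ‖q‖ < 1) (ha : a ≠ 0)
    (k n : ℕ) (hkn : k ≤ n) :
    (∀ z : ℂ, z ≠ 0 →
      (∀ j : ℤ, |j| ≤ (k : ℤ) → (s ^ j * z) ^ 2 ≠ 1) →
      (∀ i : ℕ, i ≤ k → ∀ j : ℤ, |j| ≤ (k : ℤ) →
        qPoch (c * s ^ (3 * i) * (s ^ j * z)) q (n - i) ≠ 0 ∧
        qPoch (c * s ^ (3 * i) / (s ^ j * z)) q (n - i) ≠ 0) →
      wpDIter s c k (fun w => wpPhi q a c w n) z =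
        (-1) ^ k * (2 * a) ^ k * s ^ (k * (k - 1) / 2) *
          (qPoch q q n * qPoch (c / a) q k * qPoch (a * c * q ^ (n - 1)) q k) /
          (qPoch q q (n - k) * (1 - q) ^ k) *
          wpPhi q (a * s ^ k) (c * s ^ (3 * k)) z (n - k)) ∧
    ((∀ j : ℤ, |j| ≤ (k : ℤ) → (s ^ j * (a * s ^ k)) ^ 2 ≠ 1) →
      (∀ i : ℕ, i ≤ k → ∀ j : ℤ, |j| ≤ (k : ℤ) →
        qPoch (c * s ^ (3 * i) * (s ^ j * (a * s ^ k))) q (n - i) ≠ 0 ∧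
        qPoch (c * s ^ (3 * i) / (s ^ j * (a * s ^ k))) q (n - i) ≠ 0) →
      wpDIter s c k (fun w => wpPhi q a c w n) (a * s ^ k) =
        if n = k then
          (-1) ^ k * (2 * a) ^ k * s ^ (k * (k - 1) / 2) *
            (qPoch q q k * qPoch (c / a) q k * qPoch (a * c * q ^ (k - 1)) q k) /
            (1 - q) ^ k
        else 0) := by
  subst hs
  have hs0 : s ≠ 0 := fun h => by simp [h] at hq0
  refine ⟨main1 s a c hq0 hq1 ha n k hkn, ?_⟩
  intro h2 h3
  have hz : a * s ^ k ≠ 0 := mul_ne_zero ha (pow_ne_zero _ hs0)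
  have hmain := main1 s a c hq0 hq1 ha n k hkn (a * s ^ k) hz h2 h3
  by_cases hnk : n = k
  · rw [if_pos hnk]
    subst hnk
    rw [hmain, Nat.sub_self,
      show wpPhi (s^2) (a*s^n) (c*s^(3*n)) (a*s^n) 0 = 1 from by simp [wpPhi, qPoch],
      mul_one, qPoch_zero, one_mul]
  · rw [if_neg hnk, hmain]
    have hone : qPoch ((a*s^k)/(a*s^k)) (s^2) (n-k) = 0 := by
      rw [div_self hz, qPoch]
      refine Finset.prod_eq_zero (Finset.mem_range.2 (show 0 < n-k by omega)) ?_
      simp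
    rw [show wpPhi (s^2) (a*s^k) (c*s^(3*k)) (a*s^k) (n-k) = 0 from by
        rw [wpPhi, hone, mul_zero, zero_div],
      mul_zero]
end

section
/- Linear independence of the finite well-poised basis: let q ∈ ℂ with 0 < |q| < 1, let n ∈ ℕ, and let a, c ∈ ℂ∖{0} satisfy: a ∉ {c q^m : −n ≤ m ≤ n}, a c q^m ≠ 1 for 0 ≤ m ≤ 2n−2, and c² q^m ≠ 1 for 1 ≤ m ≤ 2n−2. If λ₀,…,λ_n ∈ ℂ satisfy Σ_{k=0}^n λ_k (az; q)_k (a/z; q)_k (c q^k z; q)_{n−k} (c q^k / z; q)_{n−k} = 0 for all z ∈ ℂ∖{0}, then λ_k = 0 for every 0 ≤ k ≤ n. Equivalently, the functions Φ_0(·;a,c),…,Φ_n(·;a,c) are linearly independent as functions on ℂ∖{0} minus their common pole set. -/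
open Complex Finset Filter Topology

lemma qPoch_ne_zero {x q : ℂ} {m : ℕ} (h : ∀ j < m, x * q ^ j ≠ 1) : qPoch x q m ≠ 0 := by
  rw [qPoch]
  exact Finset.prod_ne_zero_iff.mpr fun j hj =>
    sub_ne_zero.mpr fun he => h j (Finset.mem_range.mp hj) he.symm

lemma qPoch_eq_zero {x q : ℂ} {m j : ℕ} (hj : j < m) (h : x * q ^ j = 1) :
    qPoch x q m = 0 :=
  Finset.prod_eq_zero (Finset.mem_range.mpr hj) (by rw [h]; ring)

/-- Linear independence of the finite well-poised basis. -/
theorem finite_basis_linear_independence (q : ℂ) (hq0 : 0 < ‖q‖) (hq1 : ‖q‖ < 1)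
    (n : ℕ) (a c : ℂ) (ha : a ≠ 0) (hc : c ≠ 0)
    (hg1 : ∀ m : ℤ, -(n : ℤ) ≤ m → m ≤ (n : ℤ) → a ≠ c * q ^ m)
    (hg2 : ∀ m : ℕ, m + 2 ≤ 2 * n → a * c * q ^ m ≠ 1)
    (hg3 : ∀ m : ℕ, 1 ≤ m → m + 2 ≤ 2 * n → c ^ 2 * q ^ m ≠ 1)
    (lam : ℕ → ℂ)
    (hlin : ∀ z : ℂ, z ≠ 0 →
      ∑ k ∈ Finset.range (n + 1), lam k *
        (qPoch (a * z) q k * qPoch (a / z) q k *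
          qPoch (c * q ^ k * z) q (n - k) * qPoch (c * q ^ k / z) q (n - k)) = 0) :
    ∀ k : ℕ, k ≤ n → lam k = 0 := by
  have hq : q ≠ 0 := norm_pos_iff.mp hq0
  have key : ∀ k, 1 ≤ k → k ≤ n → (∀ j, k < j → j ≤ n → lam j = 0) → lam k = 0 := by
    intro k hk1 hkn ih
    set z : ℂ := q / (c * q ^ k) with hz
    have hzne : z ≠ 0 := by
      rw [hz]; exact div_ne_zero hq (mul_ne_zero hc (pow_ne_zero _ hq))
    have hsum := hlin z hzne
    rw [Finset.sum_eq_single k] at hsum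
    · -- now hsum : lam k * (...) = 0, show the product is nonzero
      have e1 : a * z = a * q / (c * q ^ k) := by rw [hz]; ring
      have e2 : a / z = a * c * q ^ (k - 1) := by
        rw [hz, show k = (k - 1) + 1 by omega, pow_succ]
        field_simp; ring_nf
        congr 1; omega
      have e3 : c * q ^ k * z = q := by rw [hz]; field_simp
      have e4 : c * q ^ k / z = c ^ 2 * q ^ (2 * k - 1) := by
        rw [hz, show 2 * k - 1 = (k - 1) + k by omega, pow_add,
          show k = (k - 1) + 1 by omega, pow_succ]
        field_simp; ring_nf
        congr 1; omega
      rw [e1, e2, e3, e4] at hsum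
      have P1 : qPoch (a * q / (c * q ^ k)) q k ≠ 0 := by
        apply qPoch_ne_zero
        intro j hj heq
        have hcast : ((k - 1 - j : ℕ) : ℤ) = (k : ℤ) - 1 - j := by omega
        apply hg1 ((k - 1 - j : ℕ) : ℤ) (by omega) (by omega)
        rw [zpow_natCast]
        have hk' : a * q ^ (j + 1) = c * q ^ (k - 1 - j) * q ^ (j + 1) := by
          rw [mul_assoc, ← pow_add, show k - 1 - j + (j + 1) = k by omega]
          field_simp at heq
          linear_combination heq
        exact mul_right_cancel₀ (pow_ne_zero _ hq) hk'
      have P2 : qPoch (a * c * q ^ (k - 1)) q k ≠ 0 := by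
        apply qPoch_ne_zero
        intro j hj heq
        apply hg2 (k - 1 + j) (by omega)
        rw [pow_add, ← mul_assoc]
        exact heq
      have P3 : qPoch q q (n - k) ≠ 0 := by
        apply qPoch_ne_zero
        intro j hj heq
        have h1 : ‖q * q ^ j‖ < 1 := by
          rw [norm_mul, norm_pow]
          calc ‖q‖ * ‖q‖ ^ j ≤ ‖q‖ * 1 := by
                have := pow_le_one₀ (norm_nonneg q) hq1.le (n := j)
                nlinarith
            _ < 1 := by nlinarith
        rw [heq] at h1; simp at h1
      have P4 : qPoch (c ^ 2 * q ^ (2 * k - 1)) q (n - k) ≠ 0 := by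
        apply qPoch_ne_zero
        intro j hj heq
        apply hg3 (2 * k - 1 + j) (by omega) (by omega)
        rw [pow_add, ← mul_assoc]
        exact heq
      have hX : qPoch (a * q / (c * q ^ k)) q k * qPoch (a * c * q ^ (k - 1)) q k *
          qPoch q q (n - k) * qPoch (c ^ 2 * q ^ (2 * k - 1)) q (n - k) ≠ 0 :=
        mul_ne_zero (mul_ne_zero (mul_ne_zero P1 P2) P3) P4
      exact (mul_eq_zero.mp hsum).resolve_right hX
    · intro b hb hbk
      rcases lt_or_gt_of_ne hbk with hlt | hgt
      · have hzero : qPoch (c * q ^ b * z) q (n - b) = 0 := by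
          apply qPoch_eq_zero (j := k - 1 - b) (by omega)
          have hpow : q ^ b * q * q ^ (k - 1 - b) = q ^ k := by
            rw [← pow_succ, ← pow_add]; congr 1; omega
          have hrw : c * q ^ b * z * q ^ (k - 1 - b) =
              c * (q ^ b * q * q ^ (k - 1 - b)) / (c * q ^ k) := by
            rw [hz]; ring
          rw [hrw, hpow]
          exact div_self (mul_ne_zero hc (pow_ne_zero _ hq))
        rw [hzero]; ring
      · rw [ih b hgt (by have := Finset.mem_range.mp hb; omega)]; ring
    · intro hk; exact absurd (Finset.mem_range.mpr (by omega)) hk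
  have hpos : ∀ d k, 1 ≤ k → k ≤ n → n - k ≤ d → lam k = 0 := by
    intro d
    induction d with
    | zero => intro k h1 h2 h3; exact key k h1 h2 (fun j hj hjn => by omega)
    | succ d ihd =>
      intro k h1 h2 h3
      exact key k h1 h2 fun j hj hjn => ihd j (by omega) hjn (by omega)
  intro k hk
  rcases Nat.eq_zero_or_pos k with rfl | hk1
  · -- k = 0 case with large z
    set R : ℝ := ‖c‖ + 2 / (‖c‖ * ‖q‖ ^ n) + 1 with hR
    have hcqn : 0 < ‖c‖ * ‖q‖ ^ n := mul_pos (norm_pos_iff.mpr hc) (pow_pos hq0 n)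
    have hd : 0 < 2 / (‖c‖ * ‖q‖ ^ n) := by positivity
    have hRc : ‖c‖ < R := by rw [hR]; linarith
    have hR2 : 2 / (‖c‖ * ‖q‖ ^ n) < R := by rw [hR]; linarith [norm_nonneg c]
    have hR0 : 0 < R := lt_of_le_of_lt (norm_nonneg c) hRc
    have hzne : (R : ℂ) ≠ 0 := by
      simpa using hR0.ne'
    have hsum := hlin (R : ℂ) hzne
    rw [Finset.sum_eq_single 0] at hsum
    · simp only [pow_zero, Nat.sub_zero, mul_one, one_mul, qPoch_zero] at hsum
      have P3 : qPoch (c * (R : ℂ)) q n ≠ 0 := by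
        apply qPoch_ne_zero
        intro j hj heq
        have h1 : (1:ℝ) < ‖c * (R : ℂ) * q ^ j‖ := by
          rw [norm_mul, norm_mul, norm_pow, Complex.norm_real, Real.norm_eq_abs,
            abs_of_pos hR0]
          have hqjn : ‖q‖ ^ n ≤ ‖q‖ ^ j :=
            pow_le_pow_of_le_one (norm_nonneg q) hq1.le hj.le
          have h2 : 2 < R * (‖c‖ * ‖q‖ ^ n) := by
            rw [div_lt_iff₀ hcqn] at hR2; linarith
          nlinarith [norm_pos_iff.mpr hc, pow_pos hq0 n]
        rw [heq] at h1; simp at h1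
      have P4 : qPoch (c / (R : ℂ)) q n ≠ 0 := by
        apply qPoch_ne_zero
        intro j hj heq
        have h1 : ‖c / (R : ℂ) * q ^ j‖ < 1 := by
          rw [norm_mul, norm_div, norm_pow, Complex.norm_real, Real.norm_eq_abs,
            abs_of_pos hR0]
          have hqj1 : ‖q‖ ^ j ≤ 1 := pow_le_one₀ (norm_nonneg q) hq1.le
          have hcR : ‖c‖ / R < 1 := by rw [div_lt_one hR0]; exact hRc
          have hcR0 : 0 ≤ ‖c‖ / R := div_nonneg (norm_nonneg c) hR0.le
          calc ‖c‖ / R * ‖q‖ ^ j ≤ ‖c‖ / R * 1 := by nlinarith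
            _ < 1 := by nlinarith
        rw [heq] at h1; simp at h1
      rcases mul_eq_zero.mp hsum with h | h
      · exact h
      · exact absurd h (mul_ne_zero P3 P4)
    · intro b hb hb0
      rw [hpos (n - b) b (by omega) (by have := Finset.mem_range.mp hb; omega) le_rfl]
      ring
    · intro h; exact absurd (Finset.mem_range.mpr (by omega)) h
  · exact hpos (n - k) k hk1 hk le_rfl
end

section
/- Finite-grid representation of the Taylor functionals: let q, s ∈ ℂ with s² = q and 0 < |q| < 1, let a, c ∈ ℂ with a ≠ 0, and let j ∈ ℕ. Assume a² q^m ≠ 1 for 0 ≤ m ≤ 2j. Then there exist complex coefficients c₀, c₁, …, c_j, depending only on q, s, a, c, j (and not on f), such that for every function f : ℂ∖{0} → ℂ, (D^{(j)}_{c,q} f)(a s^j) = Σ_{i=0}^j c_i f(a q^i). -/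
open Complex Finset Filter Topology

lemma wpDIter_grid (s c : ℂ) (hs : s ≠ 0) :
    ∀ (k : ℕ) (z : ℂ), ∃ coef : ℕ → ℂ, ∀ f : ℂ → ℂ,
      wpDIter s c k f z = ∑ i ∈ Finset.range (k + 1),
        coef i * f (z * s ^ (2 * i) / s ^ k) := by
  intro k
  induction k with
  | zero =>
    intro z
    exact ⟨fun _ => 1, fun f => by simp [wpDIter]⟩
  | succ k ih =>
    intro z
    obtain ⟨c1, h1⟩ := ih (s * z)
    obtain ⟨c2, h2⟩ := ih (z / s)
    set c' := c * s ^ (3 * k) with hc'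
    set B := (1 - c' * z / s) * (1 - c' * z * s) * (1 - c' / (s * z)) * (1 - c' * s / z) *
      ((s - s⁻¹) * (z - z⁻¹) / 2)⁻¹ with hB
    refine ⟨fun i => B * ((if i = 0 then 0 else c1 (i - 1)) - (if i ≤ k then c2 i else 0)),
      fun f => ?_⟩
    have hstep : wpDIter s c (k + 1) f z =
        B * (wpDIter s c k f (s * z) - wpDIter s c k f (z / s)) := by
      simp only [wpDIter, wpD, awD, hB, ← hc', div_eq_mul_inv]
      ring
    have hp1 : ∀ i : ℕ, z * s ^ (2 * (i + 1)) / s ^ (k + 1) = s * z * s ^ (2 * i) / s ^ k := by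
      intro i
      have h2i : (2 : ℕ) * (i + 1) = 2 * i + 1 + 1 := by ring
      rw [h2i, pow_succ, pow_succ, pow_succ]
      field_simp
    have hp2 : ∀ i : ℕ, z * s ^ (2 * i) / s ^ (k + 1) = z / s * s ^ (2 * i) / s ^ k := by
      intro i
      rw [div_mul_eq_mul_div, div_div, ← pow_succ']
    rw [hstep, h1 f, h2 f, mul_sub]
    have e1 : B * ∑ i ∈ Finset.range (k + 1), c1 i * f (s * z * s ^ (2 * i) / s ^ k) =
        ∑ i ∈ Finset.range (k + 2),
          (B * (if i = 0 then 0 else c1 (i - 1))) * f (z * s ^ (2 * i) / s ^ (k + 1)) := by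
      rw [Finset.sum_range_succ' (fun i =>
        (B * (if i = 0 then 0 else c1 (i - 1))) * f (z * s ^ (2 * i) / s ^ (k + 1))) (k + 1)]
      have hg0 : (B * (if (0:ℕ) = 0 then (0:ℂ) else c1 (0 - 1))) *
          f (z * s ^ (2 * 0) / s ^ (k + 1)) = 0 := by simp
      rw [hg0, add_zero, Finset.mul_sum]
      refine Finset.sum_congr rfl fun i _ => ?_
      rw [if_neg (Nat.succ_ne_zero i), Nat.add_sub_cancel, hp1 i]
      ring
    have e2 : B * ∑ i ∈ Finset.range (k + 1), c2 i * f (z / s * s ^ (2 * i) / s ^ k) =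
        ∑ i ∈ Finset.range (k + 2),
          (B * (if i ≤ k then c2 i else 0)) * f (z * s ^ (2 * i) / s ^ (k + 1)) := by
      rw [Finset.sum_range_succ (fun i =>
        (B * (if i ≤ k then c2 i else 0)) * f (z * s ^ (2 * i) / s ^ (k + 1))) (k + 1)]
      rw [if_neg (by omega), mul_zero, zero_mul, add_zero, Finset.mul_sum]
      refine Finset.sum_congr rfl fun i hi => ?_
      rw [if_pos (by simpa using Nat.lt_succ_iff.mp (Finset.mem_range.mp hi)), hp2 i]
      ring
    rw [e1, e2, ← Finset.sum_sub_distrib]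
    refine Finset.sum_congr rfl fun i _ => ?_
    ring

/-- Finite-grid representation of the Taylor functionals. -/
theorem taylor_functional_finite_grid (q s a c : ℂ) (hs : s ^ 2 = q)
    (hq0 : 0 < ‖q‖) (hq1 : ‖q‖ < 1) (ha : a ≠ 0) (j : ℕ)
    (hgen : ∀ m : ℕ, m ≤ 2 * j → a ^ 2 * q ^ m ≠ 1) :
    ∃ coef : ℕ → ℂ, ∀ f : ℂ → ℂ,
      wpDIter s c j f (a * s ^ j) =
        ∑ i ∈ Finset.range (j + 1), coef i * f (a * q ^ i) := by
  have hq : q ≠ 0 := by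
    intro h; rw [h] at hq0; simp at hq0
  have hs0 : s ≠ 0 := by
    intro h; rw [h] at hs; simp at hs; exact hq hs.symm
  obtain ⟨coef, hcoef⟩ := wpDIter_grid s c hs0 j (a * s ^ j)
  refine ⟨coef, fun f => ?_⟩
  rw [hcoef f]
  refine Finset.sum_congr rfl fun i _ => ?_
  congr 1
  rw [← hs, ← pow_mul]
  congr 1
  field_simp
end

section
/- Flat functions are invisible to one-family Taylor extraction: let q, s ∈ ℂ with s² = q and 0 < |q| < 1, let a, c ∈ ℂ with a ≠ 0, and let k ∈ ℕ with a² q^m ≠ 1 for 0 ≤ m ≤ 2k and (q, c/a, a c q^{k−1}; q)_k ≠ 0. If h : ℂ∖{0} → ℂ satisfies h(a q^m) = 0 for every m ∈ ℕ, then (D^{(k)}_{c,q} h)(a s^k) = 0, and hence the well-poised Taylor coefficient t_k^{(a,c)}(h) = 0. -/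
open Complex Finset Filter Topology

lemma flat_key (q s a c : ℂ) (hs : s ^ 2 = q) (hsne : s ≠ 0) (h : ℂ → ℂ)
    (hflat : ∀ m : ℕ, h (a * q ^ m) = 0) :
    ∀ k m : ℕ, wpDIter s c k h (a * q ^ m * s ^ k) = 0 := by
  intro k
  induction k with
  | zero => intro m; simpa [wpDIter] using hflat m
  | succ k ih =>
    intro m
    have h1 : s * (a * q ^ m * s ^ (k + 1)) = a * q ^ (m + 1) * s ^ k := by
      rw [pow_succ, pow_succ, ← hs]; ring
    have h2 : (a * q ^ m * s ^ (k + 1)) / s = a * q ^ m * s ^ k := by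
      rw [pow_succ]; field_simp
    simp only [wpDIter, wpD, awD, h1, h2, ih, sub_zero, zero_div, mul_zero]

/-- Flat functions are invisible to one-family Taylor extraction. -/
theorem flat_functions_invisible (q s a c : ℂ) (hs : s ^ 2 = q)
    (hq0 : 0 < ‖q‖) (hq1 : ‖q‖ < 1) (ha : a ≠ 0) (k : ℕ)
    (hgen : ∀ m : ℕ, m ≤ 2 * k → a ^ 2 * q ^ m ≠ 1)
    (hden : qPoch q q k * qPoch (c / a) q k * qPoch (a * c * q ^ (k - 1)) q k ≠ 0)
    (h : ℂ → ℂ) (hflat : ∀ m : ℕ, h (a * q ^ m) = 0) :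
    wpDIter s c k h (a * s ^ k) = 0 ∧ wpT q s a c k h = 0 := by
  have hq : q ≠ 0 := by
    intro h0; rw [h0] at hq0; simp at hq0
  have hsne : s ≠ 0 := by
    intro h0; rw [h0] at hs; simp at hs; exact hq hs.symm
  have key := flat_key q s a c hs hsne h hflat k 0
  simp only [pow_zero, mul_one] at key
  exact ⟨key, by rw [wpT, key, mul_zero]⟩
end

section
/- Leading annular profile of a quotient of reciprocal q-products: let q ∈ ℂ with 0 < |q| < 1 and α, β, λ, w ∈ ℂ∖{0}. Assume β q^j λ w ≠ 1 for all j ∈ ℕ and λ w ≠ β q^j for all j ∈ ℤ (so that all denominators below are nonzero for every N). Then lim_{N→∞} (β/α)^N · (α λ q^N w; q)_∞ (α/(λ q^N w); q)_∞ / ((β λ q^N w; q)_∞ (β/(λ q^N w); q)_∞) = (λ w q/α; q)_∞ (α/(λ w); q)_∞ / ((λ w q/β; q)_∞ (β/(λ w); q)_∞). -/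
open Complex Finset Filter Topology

namespace LAP

lemma norm_prod_sub_one (x : ℕ → ℂ) (F : Finset ℕ) :
    ‖(∏ j ∈ F, (1 - x j)) - 1‖ ≤ (∏ j ∈ F, (1 + ‖x j‖)) - 1 := by
  classical
  induction F using Finset.induction_on with
  | empty => simp
  | insert i F hiF ih =>
    rw [Finset.prod_insert hiF, Finset.prod_insert hiF]
    have hQ1 : (1:ℝ) ≤ ∏ j ∈ F, (1 + ‖x j‖) := by
      calc (1:ℝ) = ∏ _j ∈ F, 1 := by simp
        _ ≤ _ := Finset.prod_le_prod (fun j _ => zero_le_one)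
            (fun j _ => le_add_of_nonneg_right (norm_nonneg (x j)))
    have hP : ‖∏ j ∈ F, (1 - x j)‖ ≤ ∏ j ∈ F, (1 + ‖x j‖) := by
      have h := norm_sub_norm_le (∏ j ∈ F, (1 - x j)) 1
      simp only [norm_one] at h
      linarith
    have key : (1 - x i) * ∏ j ∈ F, (1 - x j) - 1
        = ((∏ j ∈ F, (1 - x j)) - 1) - x i * ∏ j ∈ F, (1 - x j) := by ring
    rw [key]
    refine (norm_sub_le _ _).trans ?_
    rw [norm_mul]
    nlinarith [norm_nonneg (x i), norm_nonneg (∏ j ∈ F, (1 - x j))]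

lemma prod_one_add_le_exp_sum (x : ℕ → ℂ) (F : Finset ℕ) :
    (∏ j ∈ F, (1 + ‖x j‖)) ≤ Real.exp (∑ j ∈ F, ‖x j‖) := by
  calc (∏ j ∈ F, (1 + ‖x j‖)) ≤ ∏ j ∈ F, Real.exp ‖x j‖ := by
        refine Finset.prod_le_prod (fun j _ => by positivity) (fun j _ => ?_)
        have := Real.add_one_le_exp ‖x j‖; linarith
    _ = Real.exp (∑ j ∈ F, ‖x j‖) := by rw [Real.exp_sum]

lemma sum_norm_tail_le (x : ℕ → ℂ) (hx : Summable fun j => ‖x j‖) (N : ℕ) (F : Finset ℕ)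
    (hF : ∀ j ∈ F, N ≤ j) : ∑ j ∈ F, ‖x j‖ ≤ ∑' k, ‖x (k + N)‖ := by
  have hsum : Summable fun k => ‖x (k + N)‖ := (summable_nat_add_iff N).2 hx
  have heq : ∑ j ∈ F, ‖x j‖ = ∑ k ∈ F.image (· - N), ‖x (k + N)‖ := by
    rw [Finset.sum_image (fun a ha b hb hab => by
      have := hF a ha; have := hF b hb; omega)]
    exact Finset.sum_congr rfl fun j hj => by rw [Nat.sub_add_cancel (hF j hj)]
  rw [heq]
  exact Summable.sum_le_tsum _ (fun _ _ => norm_nonneg _) hsum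

lemma norm_prod_tail_sub_one_le (x : ℕ → ℂ) (hx : Summable fun j => ‖x j‖) (N : ℕ)
    (F : Finset ℕ) (hF : ∀ j ∈ F, N ≤ j) :
    ‖(∏ j ∈ F, (1 - x j)) - 1‖ ≤ Real.exp (∑' k, ‖x (k + N)‖) - 1 := by
  refine (norm_prod_sub_one x F).trans ?_
  have h1 := prod_one_add_le_exp_sum x F
  have h2 := Real.exp_le_exp.2 (sum_norm_tail_le x hx N F hF)
  linarith

lemma norm_prod_sub_one_le_exp (x : ℕ → ℂ) (hx : Summable fun j => ‖x j‖) (F : Finset ℕ) :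
    ‖(∏ j ∈ F, (1 - x j)) - 1‖ ≤ Real.exp (∑' j, ‖x j‖) - 1 := by
  refine (norm_prod_sub_one x F).trans ?_
  have h1 := prod_one_add_le_exp_sum x F
  have h2 := Real.exp_le_exp.2 (Summable.sum_le_tsum F (fun (j:ℕ) _ => norm_nonneg (x j)) hx)
  linarith

lemma norm_prod_le_exp (x : ℕ → ℂ) (hx : Summable fun j => ‖x j‖) (F : Finset ℕ) :
    ‖∏ j ∈ F, (1 - x j)‖ ≤ Real.exp (∑' j, ‖x j‖) := by
  have h := norm_prod_sub_one_le_exp x hx F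
  have h2 := norm_sub_norm_le (∏ j ∈ F, (1 - x j)) 1
  simp only [norm_one] at h2
  linarith

lemma multipliable_one_sub (x : ℕ → ℂ) (hx : Summable fun j => ‖x j‖) :
    Multipliable fun j => 1 - x j := by
  set S := ∑' j, ‖x j‖ with hS
  set P : ℕ → ℂ := fun N => ∏ j ∈ Finset.range N, (1 - x j) with hPdef
  set t : ℕ → ℝ := fun N => ∑' k, ‖x (k + N)‖ with htdef
  have htail : Tendsto t atTop (𝓝 0) := tendsto_sum_nat_add fun j => ‖x j‖
  have hb : Tendsto (fun N => Real.exp S * (Real.exp (t N) - 1)) atTop (𝓝 0) := by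
    have h := ((Real.continuous_exp.tendsto 0).comp htail).sub_const 1
    simpa using tendsto_const_nhds.mul h
  have hdist : ∀ n m N, N ≤ n → N ≤ m →
      dist (P n) (P m) ≤ Real.exp S * (Real.exp (t N) - 1) := by
    have key : ∀ n m N, N ≤ n → n ≤ m →
        dist (P n) (P m) ≤ Real.exp S * (Real.exp (t N) - 1) := by
      intro n m N hNn hnm
      have hsub : Finset.range n ⊆ Finset.range m := Finset.range_subset_range.2 hnm
      have hsplit : P m = (∏ j ∈ Finset.range m \ Finset.range n, (1 - x j)) * P n :=
        (Finset.prod_sdiff hsub).symm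
      have hdiff : ‖(∏ j ∈ Finset.range m \ Finset.range n, (1 - x j)) - 1‖
          ≤ Real.exp (t N) - 1 :=
        norm_prod_tail_sub_one_le x hx N _ (fun j hj => by
          have h' := (Finset.mem_sdiff.1 hj).2
          simp only [Finset.mem_range, not_lt] at h'
          omega)
      rw [dist_eq_norm, hsplit]
      have : P n - (∏ j ∈ Finset.range m \ Finset.range n, (1 - x j)) * P n
          = -(((∏ j ∈ Finset.range m \ Finset.range n, (1 - x j)) - 1) * P n) := by ring
      rw [this, norm_neg, norm_mul]
      have hPn : ‖P n‖ ≤ Real.exp S := norm_prod_le_exp x hx _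
      have h0 : (0:ℝ) ≤ ‖(∏ j ∈ Finset.range m \ Finset.range n, (1 - x j)) - 1‖ :=
        norm_nonneg _
      nlinarith [norm_nonneg (P n), Real.exp_pos S]
    intro n m N hNn hNm
    rcases le_total n m with h | h
    · exact key n m N hNn h
    · rw [dist_comm]; exact key m n N hNm h
  have hcauchy : CauchySeq P := cauchySeq_of_le_tendsto_0 _ hdist hb
  obtain ⟨L, hL⟩ := cauchySeq_tendsto_of_complete hcauchy
  refine ⟨L, ?_⟩
  rw [HasProd, Metric.tendsto_nhds]
  intro ε hε
  have hseq : Tendsto (fun N => ‖P N - L‖ + Real.exp S * (Real.exp (t N) - 1)) atTop (𝓝 0) := by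
    have h1 : Tendsto (fun N => ‖P N - L‖) atTop (𝓝 0) :=
      tendsto_iff_norm_sub_tendsto_zero.1 hL
    simpa using h1.add hb
  obtain ⟨N, hN⟩ := (hseq.eventually (gt_mem_nhds hε)).exists
  rw [SummationFilter.unconditional_filter, Filter.eventually_atTop]
  refine ⟨Finset.range N, fun F hF => ?_⟩
  have hsub : Finset.range N ⊆ F := hF
  have hsplit : ∏ j ∈ F, (1 - x j) = (∏ j ∈ F \ Finset.range N, (1 - x j)) * P N :=
    (Finset.prod_sdiff hsub).symm
  have hdiff : ‖(∏ j ∈ F \ Finset.range N, (1 - x j)) - 1‖ ≤ Real.exp (t N) - 1 :=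
    norm_prod_tail_sub_one_le x hx N _ (fun j hj => by
      have h' := (Finset.mem_sdiff.1 hj).2
      simp only [Finset.mem_range, not_lt] at h'
      omega)
  have htri : dist (∏ j ∈ F, (1 - x j)) L
      ≤ ‖(∏ j ∈ F, (1 - x j)) - P N‖ + ‖P N - L‖ := by
    rw [dist_eq_norm]
    have := norm_sub_le ((∏ j ∈ F, (1 - x j)) - P N) (P N - L)
    simpa using norm_sub_le_norm_sub_add_norm_sub (∏ j ∈ F, (1 - x j)) (P N) L
  have hterm : ‖(∏ j ∈ F, (1 - x j)) - P N‖ ≤ Real.exp S * (Real.exp (t N) - 1) := by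
    rw [hsplit]
    have : (∏ j ∈ F \ Finset.range N, (1 - x j)) * P N - P N
        = ((∏ j ∈ F \ Finset.range N, (1 - x j)) - 1) * P N := by ring
    rw [this, norm_mul]
    have hPn : ‖P N‖ ≤ Real.exp S := norm_prod_le_exp x hx _
    nlinarith [norm_nonneg (P N), Real.exp_pos S,
      norm_nonneg ((∏ j ∈ F \ Finset.range N, (1 - x j)) - 1)]
  calc dist (∏ j ∈ F, (1 - x j)) L ≤ ‖(∏ j ∈ F, (1 - x j)) - P N‖ + ‖P N - L‖ := htri
    _ ≤ Real.exp S * (Real.exp (t N) - 1) + ‖P N - L‖ := by linarith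
    _ < ε := by linarith [hN]

lemma tendsto_partial (x : ℕ → ℂ) (hx : Summable fun j => ‖x j‖) :
    Tendsto (fun N => ∏ j ∈ Finset.range N, (1 - x j)) atTop (𝓝 (∏' j, (1 - x j))) :=
  Multipliable.tendsto_prod_tprod_nat (multipliable_one_sub x hx)

lemma norm_tprod_sub_one_le (x : ℕ → ℂ) (hx : Summable fun j => ‖x j‖) :
    ‖(∏' j, (1 - x j)) - 1‖ ≤ Real.exp (∑' j, ‖x j‖) - 1 := by
  refine le_of_tendsto (((tendsto_partial x hx).sub_const 1).norm) ?_
  exact Filter.Eventually.of_forall fun N => norm_prod_sub_one_le_exp x hx _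

lemma tprod_split (x : ℕ → ℂ) (hx : Summable fun j => ‖x j‖) (N : ℕ) :
    (∏' j, (1 - x j)) = (∏ j ∈ Finset.range N, (1 - x j)) * ∏' j, (1 - x (j + N)) := by
  have hx' : Summable fun k => ‖x (k + N)‖ := (summable_nat_add_iff N).2 hx
  have h1 := tendsto_partial x hx
  have h2 := tendsto_partial _ hx'
  have hcomp : Tendsto (fun M : ℕ => N + M) atTop atTop := by
    simpa [add_comm] using tendsto_add_atTop_nat N
  have h3 := h1.comp hcomp
  simp only [Function.comp_def] at h3
  have h4 : (fun M => ∏ j ∈ Finset.range (N + M), (1 - x j))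
      = fun M => (∏ j ∈ Finset.range N, (1 - x j)) * ∏ j ∈ Finset.range M, (1 - x (j + N)) := by
    funext M
    rw [Finset.prod_range_add]
    congr 1
    exact Finset.prod_congr rfl fun j _ => by rw [add_comm]
  rw [h4] at h3
  exact tendsto_nhds_unique h3 (tendsto_const_nhds.mul h2)

lemma tprod_one_sub_ne_zero (x : ℕ → ℂ) (hx : Summable fun j => ‖x j‖)
    (h : ∀ j, 1 - x j ≠ 0) : (∏' j, (1 - x j)) ≠ 0 := by
  have htail : Tendsto (fun N => ∑' k, ‖x (k + N)‖) atTop (𝓝 0) :=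
    tendsto_sum_nat_add fun j => ‖x j‖
  have hev : ∀ᶠ N in atTop, Real.exp (∑' k, ‖x (k + N)‖) - 1 < 1 := by
    have h' := ((Real.continuous_exp.tendsto 0).comp htail).sub_const 1
    simp only [Function.comp_def, Real.exp_zero] at h'
    have : (0:ℝ) < 1 := one_pos
    simpa using h'.eventually (gt_mem_nhds (by norm_num : ((1:ℝ) - 1) < 1))
  obtain ⟨N, hN⟩ := hev.exists
  have hx' : Summable fun k => ‖x (k + N)‖ := (summable_nat_add_iff N).2 hx
  rw [tprod_split x hx N]
  refine mul_ne_zero (Finset.prod_ne_zero_iff.2 fun j _ => h j) ?_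
  intro h0
  have hb := norm_tprod_sub_one_le (fun k => x (k + N)) hx'
  rw [h0] at hb
  simp only [zero_sub, norm_neg, norm_one] at hb
  linarith

lemma summable_norm_geo (a q : ℂ) (hq1 : ‖q‖ < 1) :
    Summable fun j : ℕ => ‖a * q ^ j‖ := by
  simpa [norm_mul, norm_pow] using
    (summable_geometric_of_lt_one (norm_nonneg q) hq1).mul_left ‖a‖

lemma tendsto_qPoch (a q : ℂ) (hq1 : ‖q‖ < 1) :
    Tendsto (fun N => qPoch a q N) atTop (𝓝 (qPochInf a q)) := by
  simpa [qPoch, qPochInf] using tendsto_partial (fun j => a * q ^ j) (summable_norm_geo a q hq1)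

lemma norm_qPochInf_sub_one (a q : ℂ) (hq1 : ‖q‖ < 1) :
    ‖qPochInf a q - 1‖ ≤ Real.exp (‖a‖ * (1 - ‖q‖)⁻¹) - 1 := by
  have h := norm_tprod_sub_one_le (fun j => a * q ^ j) (summable_norm_geo a q hq1)
  have ht : ∑' j : ℕ, ‖a * q ^ j‖ = ‖a‖ * (1 - ‖q‖)⁻¹ := by
    simp only [norm_mul, norm_pow]
    rw [tsum_mul_left, tsum_geometric_of_lt_one (norm_nonneg q) hq1]
  rw [ht] at h
  exact h

lemma tendsto_tail_one (a q : ℂ) (hq1 : ‖q‖ < 1) :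
    Tendsto (fun N => qPochInf (a * q ^ N) q) atTop (𝓝 1) := by
  have hbound : ∀ N, ‖qPochInf (a * q ^ N) q - 1‖
      ≤ Real.exp (‖a‖ * ‖q‖ ^ N * (1 - ‖q‖)⁻¹) - 1 := by
    intro N
    have := norm_qPochInf_sub_one (a * q ^ N) q hq1
    simpa [norm_mul, norm_pow] using this
  have h0 : Tendsto (fun N => ‖a‖ * ‖q‖ ^ N * (1 - ‖q‖)⁻¹) atTop (𝓝 0) := by
    have h := tendsto_pow_atTop_nhds_zero_of_lt_one (norm_nonneg q) hq1
    simpa using (h.const_mul ‖a‖).mul_const (1 - ‖q‖)⁻¹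
  have hb : Tendsto (fun N => Real.exp (‖a‖ * ‖q‖ ^ N * (1 - ‖q‖)⁻¹) - 1) atTop (𝓝 0) := by
    have := ((Real.continuous_exp.tendsto 0).comp h0).sub_const 1
    simpa using this
  have hsq := squeeze_zero_norm hbound hb
  have := hsq.add_const 1
  simpa using this

lemma qPochInf_split (a q : ℂ) (hq1 : ‖q‖ < 1) (N : ℕ) :
    qPochInf a q = qPoch a q N * qPochInf (a * q ^ N) q := by
  have hx := summable_norm_geo a q hq1
  have h := tprod_split (fun j => a * q ^ j) hx N
  have hfun : (fun j : ℕ => 1 - a * q ^ (j + N)) = fun j => 1 - (a * q ^ N) * q ^ j := by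
    funext j
    rw [pow_add]
    ring
  rw [hfun] at h
  simpa [qPochInf, qPoch] using h

lemma qPochInf_ne_zero (a q : ℂ) (hq1 : ‖q‖ < 1) (h : ∀ j : ℕ, 1 - a * q ^ j ≠ 0) :
    qPochInf a q ≠ 0 :=
  tprod_one_sub_ne_zero (fun j => a * q ^ j) (summable_norm_geo a q hq1) h

lemma qPoch_shift (q c : ℂ) (hq : q ≠ 0) (hc : c ≠ 0) (N : ℕ) :
    qPoch (c / q ^ N) q N
      = (-c) ^ N * (q ^ (∑ j ∈ Finset.range N, j) / q ^ (N * N)) * qPoch (q / c) q N := by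
  have hqN : (q : ℂ) ^ N ≠ 0 := pow_ne_zero _ hq
  have hterm : ∀ j ∈ Finset.range N,
      1 - c / q ^ N * q ^ j = (-(c * q ^ j) / q ^ N) * (1 - q ^ (N - j) / c) := by
    intro j hj
    have hjN : j < N := Finset.mem_range.1 hj
    have hpow : q ^ (N - j) * q ^ j = q ^ N := by
      rw [← pow_add]
      congr 1
      omega
    field_simp
    linear_combination (-1) * hpow
  rw [qPoch, Finset.prod_congr rfl hterm, Finset.prod_mul_distrib]
  have h1 : ∏ j ∈ Finset.range N, (-(c * q ^ j) / q ^ N)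
      = (-c) ^ N * q ^ (∑ j ∈ Finset.range N, j) / q ^ (N * N) := by
    rw [Finset.prod_div_distrib, Finset.prod_const, Finset.card_range, ← pow_mul,
      show ∏ j ∈ Finset.range N, (-(c * q ^ j)) = ∏ j ∈ Finset.range N, ((-c) * q ^ j) from
        Finset.prod_congr rfl fun j _ => by ring,
      Finset.prod_mul_distrib, Finset.prod_const, Finset.card_range,
      Finset.prod_pow_eq_pow_sum]
  have h2 : ∏ j ∈ Finset.range N, (1 - q ^ (N - j) / c) = qPoch (q / c) q N := by
    rw [qPoch, ← Finset.prod_range_reflect (fun j => 1 - q / c * q ^ j) N]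
    refine Finset.prod_congr rfl fun j hj => ?_
    have hjN : j < N := Finset.mem_range.1 hj
    have : q / c * q ^ (N - 1 - j) = q ^ (N - j) / c := by
      rw [div_mul_eq_mul_div]
      congr 1
      rw [← pow_succ']
      congr 1
      omega
    rw [this]
  rw [h1, h2]
  ring

end LAP

/-- Leading annular profile of a quotient of reciprocal q-products. -/
theorem leading_annular_profile (q α β lam w : ℂ)
    (hq0 : 0 < ‖q‖) (hq1 : ‖q‖ < 1)
    (hα : α ≠ 0) (hβ : β ≠ 0) (hlam : lam ≠ 0) (hw : w ≠ 0)
    (h1 : ∀ j : ℕ, β * q ^ j * (lam * w) ≠ 1)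
    (h2 : ∀ j : ℤ, lam * w ≠ β * q ^ j) :
    Filter.Tendsto
      (fun N : ℕ => (β / α) ^ N *
        (qPochInf (α * lam * q ^ N * w) q * qPochInf (α / (lam * q ^ N * w)) q) /
        (qPochInf (β * lam * q ^ N * w) q * qPochInf (β / (lam * q ^ N * w)) q))
      Filter.atTop
      (nhds ((qPochInf (lam * w * q / α) q * qPochInf (α / (lam * w)) q) /
        (qPochInf (lam * w * q / β) q * qPochInf (β / (lam * w)) q))) := by
  have hq : q ≠ 0 := by
    intro h; rw [h] at hq0; simp at hq0
  have hu : lam * w ≠ 0 := mul_ne_zero hlam hw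
  set u := lam * w with hu_def
  -- the two limit denominators are nonzero
  have hne1 : qPochInf (u * q / β) q ≠ 0 := by
    refine LAP.qPochInf_ne_zero _ q hq1 fun j => ?_
    intro h0
    rw [sub_eq_zero] at h0
    have hqj : (q : ℂ) ^ (j + 1) ≠ 0 := pow_ne_zero _ hq
    have hb : β = u * q ^ (j + 1) := by
      field_simp at h0
      rw [pow_succ]
      linear_combination h0
    apply h2 (-((j : ℤ) + 1))
    rw [show -((j : ℤ) + 1) = -(((j + 1 : ℕ) : ℤ)) by push_cast; ring, zpow_neg, zpow_natCast,
      hb, mul_assoc, mul_inv_cancel₀ hqj, mul_one]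
  have hne2 : qPochInf (β / u) q ≠ 0 := by
    refine LAP.qPochInf_ne_zero _ q hq1 fun j => ?_
    intro h0
    rw [sub_eq_zero] at h0
    have hb : u = β * q ^ j := by
      field_simp at h0
      linear_combination h0
    apply h2 (j : ℤ)
    rw [zpow_natCast]
    exact hb
  -- argument normalizations
  have harg1 : ∀ N : ℕ, α * lam * q ^ N * w = α * u * q ^ N := fun N => by
    rw [hu_def]; ring
  have harg1' : ∀ N : ℕ, β * lam * q ^ N * w = β * u * q ^ N := fun N => by
    rw [hu_def]; ring
  have harg2 : ∀ N : ℕ, α / (lam * q ^ N * w) = α / u / q ^ N := fun N => by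
    rw [div_div, hu_def]; ring_nf
  have harg2' : ∀ N : ℕ, β / (lam * q ^ N * w) = β / u / q ^ N := fun N => by
    rw [div_div, hu_def]; ring_nf
  -- the algebraic identity, valid for every N
  have hmain : ∀ N : ℕ,
      (β / α) ^ N *
        (qPochInf (α * lam * q ^ N * w) q * qPochInf (α / (lam * q ^ N * w)) q) /
        (qPochInf (β * lam * q ^ N * w) q * qPochInf (β / (lam * q ^ N * w)) q)
      = qPochInf (α * u * q ^ N) q * (qPoch (u * q / α) q N * qPochInf (α / u) q) /
        (qPochInf (β * u * q ^ N) q * (qPoch (u * q / β) q N * qPochInf (β / u) q)) := by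
    intro N
    have hqN : (q : ℂ) ^ N ≠ 0 := pow_ne_zero _ hq
    have eα : qPochInf (α / (lam * q ^ N * w)) q
        = qPoch (α / u / q ^ N) q N * qPochInf (α / u) q := by
      rw [harg2 N, LAP.qPochInf_split (α / u / q ^ N) q hq1 N, div_mul_cancel₀ _ hqN]
    have eβ : qPochInf (β / (lam * q ^ N * w)) q
        = qPoch (β / u / q ^ N) q N * qPochInf (β / u) q := by
      rw [harg2' N, LAP.qPochInf_split (β / u / q ^ N) q hq1 N, div_mul_cancel₀ _ hqN]
    rw [harg1 N, harg1' N, eα, eβ,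
      LAP.qPoch_shift q (α / u) hq (div_ne_zero hα hu) N,
      LAP.qPoch_shift q (β / u) hq (div_ne_zero hβ hu) N,
      show q / (α / u) = u * q / α from by rw [div_div_eq_mul_div, mul_comm],
      show q / (β / u) = u * q / β from by rw [div_div_eq_mul_div, mul_comm]]
    set s := q ^ (∑ j ∈ Finset.range N, j) / q ^ (N * N) with hs
    have hs0 : s ≠ 0 := div_ne_zero (pow_ne_zero _ hq) (pow_ne_zero _ hq)
    have hc : (β / α) ^ N * (-(α / u)) ^ N = (-(β / u)) ^ N := by
      rw [← mul_pow]
      congr 1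
      field_simp
    have hcs0 : (-(β / u)) ^ N * s ≠ 0 :=
      mul_ne_zero (pow_ne_zero _ (neg_ne_zero.2 (div_ne_zero hβ hu))) hs0
    have expand : ∀ X Pa Ia Y Pb Ib : ℂ,
        (β / α) ^ N * (X * ((-(α / u)) ^ N * s * Pa * Ia)) /
          (Y * ((-(β / u)) ^ N * s * Pb * Ib))
        = X * (Pa * Ia) / (Y * (Pb * Ib)) := by
      intro X Pa Ia Y Pb Ib
      rw [show (β / α) ^ N * (X * ((-(α / u)) ^ N * s * Pa * Ia))
            = (-(β / u)) ^ N * s * (X * (Pa * Ia)) from by rw [← hc]; ring,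
        show Y * ((-(β / u)) ^ N * s * Pb * Ib)
            = (-(β / u)) ^ N * s * (Y * (Pb * Ib)) from by ring,
        mul_div_mul_left _ _ hcs0]
    exact expand _ _ _ _ _ _
  -- limits
  have hA1 := LAP.tendsto_tail_one (α * u) q hq1
  have hB1 := LAP.tendsto_tail_one (β * u) q hq1
  have hPα := LAP.tendsto_qPoch (u * q / α) q hq1
  have hPβ := LAP.tendsto_qPoch (u * q / β) q hq1
  have hnum : Tendsto
      (fun N => qPochInf (α * u * q ^ N) q * (qPoch (u * q / α) q N * qPochInf (α / u) q))
      atTop (𝓝 (1 * (qPochInf (u * q / α) q * qPochInf (α / u) q))) := by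
    have h := hA1.mul (hPα.mul_const (qPochInf (α / u) q))
    simpa [mul_assoc] using h
  have hden : Tendsto
      (fun N => qPochInf (β * u * q ^ N) q * (qPoch (u * q / β) q N * qPochInf (β / u) q))
      atTop (𝓝 (1 * (qPochInf (u * q / β) q * qPochInf (β / u) q))) := by
    have h := hB1.mul (hPβ.mul_const (qPochInf (β / u) q))
    simpa [mul_assoc] using h
  have hden0 : (1 : ℂ) * (qPochInf (u * q / β) q * qPochInf (β / u) q) ≠ 0 := by
    rw [one_mul]; exact mul_ne_zero hne1 hne2
  have hfinal := hnum.div hden hden0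
  simp only [one_mul] at hfinal
  exact hfinal.congr fun N => (hmain N).symm
end
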